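/- Let S = (P, L, I) be a finite generalized hexagon or generalized octagon, and let G be a group of automorphisms of S acting faithfully and primitively on the point set P. Then for every nontrivial normal subgroup M of G, the centralizer of M in G is trivial: C_G(M) = 1. (In particular, the O'Nan–Scott type of G on P is not HA, HS or HC.) -/

import Mathlib

open Equiv

/-- The incidence graph of a point-line geometry. -/
def incGraph {P L : Type*} (I : P → L → Prop) : SimpleGraph (P ⊕ L) where
  Adj x y := (∃ p l, x = Sum.inl p ∧ y = Sum.inr l ∧ I p l) ∨
             (∃ p l, x = Sum.inr l ∧ y = Sum.inl p ∧ I p l)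
  symm := by
    constructor
    rintro x y (⟨p, l, rfl, rfl, h⟩ | ⟨p, l, rfl, rfl, h⟩)
    · exact Or.inr ⟨p, l, rfl, rfl, h⟩
    · exact Or.inl ⟨p, l, rfl, rfl, h⟩
  loopless := by
    constructor
    rintro x (⟨p, l, rfl, h2, -⟩ | ⟨p, l, rfl, h2, -⟩) <;> exact absurd h2 (by simp)

/-- `S = (P, L, I)` is a generalized `n`-gon: thickness plus the incidence graph has
diameter `n` and girth `2n`. -/
def IsGenPolygon {P L : Type*} (n : ℕ) (I : P → L → Prop) : Prop :=
  (∀ p : P, 3 ≤ Nat.card {l : L // I p l}) ∧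
  (∀ l : L, 3 ≤ Nat.card {p : P // I p l}) ∧
  (incGraph I).ediam = (n : ℕ∞) ∧
  (incGraph I).egirth = (2 * n : ℕ∞)

/-- The group of automorphisms of the geometry `(P, L, I)`, as a subgroup of
`Perm P × Perm L`. -/
def autGroup {P L : Type*} (I : P → L → Prop) : Subgroup (Perm P × Perm L) where
  carrier := {g | ∀ p l, I p l ↔ I (g.1 p) (g.2 l)}
  one_mem' := by intro p l; simp
  mul_mem' := by
    intro a b ha hb p l
    simpa [Perm.mul_apply] using (hb p l).trans (ha (b.1 p) (b.2 l))
  inv_mem' := by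
    intro a ha p l
    simpa using (ha (a⁻¹.1 p) (a⁻¹.2 l)).symm

/-- A subgroup `G` of `Perm P × Perm L` is flag-transitive on the geometry `(P, L, I)`. -/
def FlagTransitive {P L : Type*} (I : P → L → Prop)
    (G : Subgroup (Perm P × Perm L)) : Prop :=
  ∀ p l p' l', I p l → I p' l' → ∃ g ∈ G, g.1 p = p' ∧ g.2 l = l'

/-- The induced action of `G` on the point set is primitive: it is transitive and
preserves no nontrivial partition (every block is trivial). -/
def PrimitiveOnPoints {P L : Type*} (G : Subgroup (Perm P × Perm L)) : Prop :=
  (∀ x y : P, ∃ g ∈ G, g.1 x = y) ∧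
  ∀ B : Set P, (∀ g ∈ G, (g.1 : P → P) '' B = B ∨ Disjoint ((g.1 : P → P) '' B) B) →
    B.Subsingleton ∨ B = Set.univ

/-- The induced action of `G` on the line set is primitive. -/
def PrimitiveOnLines {P L : Type*} (G : Subgroup (Perm P × Perm L)) : Prop :=
  (∀ x y : L, ∃ g ∈ G, g.2 x = y) ∧
  ∀ B : Set L, (∀ g ∈ G, (g.2 : L → L) '' B = B ∨ Disjoint ((g.2 : L → L) '' B) B) →
    B.Subsingleton ∨ B = Set.univ

/-- A group is almost simple if it has a normal subgroup `T` which is non-abelian simple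
and is contained in every nontrivial normal subgroup (so `T` is the unique minimal normal
subgroup, the socle). -/
def IsAlmostSimple (G : Type*) [Group G] : Prop :=
  ∃ T : Subgroup G, T.Normal ∧ IsSimpleGroup T ∧ (∃ a b : T, a * b ≠ b * a) ∧
    ∀ N : Subgroup G, N.Normal → N ≠ ⊥ → T ≤ N

/-!
A nontrivial normal subgroup of a primitive group is transitive, so if `C_G(M) ≠ 1` then `M`
and `C_G(M)` are two point-transitive groups of automorphisms centralizing each other. The
incidence graph of a generalized hexagon or octagon has girth at least `12`, so the geometry
contains no triangles and no quadrangles. If `m ∈ M` moves a point `x` to another point of a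
line `l` through `x`, then `m` fixes `l`: otherwise, with `c ∈ C_G(M)` mapping `x` to a third
point of `l`, the points `m x`, `c x`, `m (c x) = c (m x)` would form a triangle with sides
`l`, `c l`, `m l`. Now take two lines `l₁`, `l₂` through `x`, an `m ∈ M` sliding `x` along
`l₁` and a `c ∈ C_G(M)` sliding `x` along `l₂`: then `x`, `m x`, `m (c x) = c (m x)`, `c x`
form a quadrangle with sides `l₁`, `m l₂`, `c l₁`, `l₂`.
-/

lemma Set.exists_mem_ne_ne_of_two_lt_ncard {α : Type*} {s : Set α} (hs : 2 < s.ncard) (a b : α) :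
    ∃ c ∈ s, c ≠ a ∧ c ≠ b := by
  have hab : ({a, b} : Set α).ncard < s.ncard :=
    (Set.ncard_insert_le a {b}).trans_lt (by simpa using hs)
  simpa using Set.exists_mem_notMem_of_ncard_lt_ncard hab

section

variable {P L : Type*} {I : P → L → Prop}

@[simp]
lemma incGraph_adj_inl_inr {p : P} {l : L} : (incGraph I).Adj (.inl p) (.inr l) ↔ I p l := by
  simp [incGraph]

@[simp]
lemma incGraph_adj_inr_inl {p : P} {l : L} : (incGraph I).Adj (.inr l) (.inl p) ↔ I p l := by
  simp [incGraph]

lemma eq_or_eq_of_four_lt_egirth (hg : 4 < (incGraph I).egirth) {p₁ p₂ : P} {l₁ l₂ : L}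
    (h₁₁ : I p₁ l₁) (h₂₁ : I p₂ l₁) (h₂₂ : I p₂ l₂) (h₁₂ : I p₁ l₂) : p₁ = p₂ ∨ l₁ = l₂ := by
  by_contra! hne
  let w : (incGraph I).Walk (.inl p₁) (.inl p₁) :=
    .cons (incGraph_adj_inl_inr.2 h₁₁) <| .cons (incGraph_adj_inr_inl.2 h₂₁) <|
    .cons (incGraph_adj_inl_inr.2 h₂₂) <| .cons (incGraph_adj_inr_inl.2 h₁₂) .nil
  have hw : w.IsCircuit := ⟨⟨by simp [w, hne.1, hne.2, hne.1.symm]⟩, by simp [w]⟩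
  exact hg.not_ge (by simpa [w] using hw.egirth_le_length)

lemma false_of_triangle (hg : 6 < (incGraph I).egirth) {p₁ p₂ p₃ : P} {l₁ l₂ l₃ : L}
    (h₁ : I p₁ l₁) (h₂ : I p₂ l₁) (h₃ : I p₂ l₂) (h₄ : I p₃ l₂) (h₅ : I p₃ l₃) (h₆ : I p₁ l₃)
    (hp₁₂ : p₁ ≠ p₂) (hp₂₃ : p₂ ≠ p₃) (hp₃₁ : p₃ ≠ p₁)
    (hl₁₂ : l₁ ≠ l₂) (hl₂₃ : l₂ ≠ l₃) (hl₃₁ : l₃ ≠ l₁) : False := by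
  let w : (incGraph I).Walk (.inl p₁) (.inl p₁) :=
    .cons (incGraph_adj_inl_inr.2 h₁) <| .cons (incGraph_adj_inr_inl.2 h₂) <|
    .cons (incGraph_adj_inl_inr.2 h₃) <| .cons (incGraph_adj_inr_inl.2 h₄) <|
    .cons (incGraph_adj_inl_inr.2 h₅) <| .cons (incGraph_adj_inr_inl.2 h₆) .nil
  have hw : w.IsCircuit := ⟨⟨by
    simp [w, hp₁₂, hp₂₃, hp₃₁, hl₁₂, hl₂₃, hp₁₂.symm, hp₃₁.symm, hl₃₁.symm]⟩, by simp [w]⟩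
  exact hg.not_ge (by simpa [w] using hw.egirth_le_length)

lemma false_of_quadrangle (hg : 8 < (incGraph I).egirth) {p₁ p₂ p₃ p₄ : P} {l₁ l₂ l₃ l₄ : L}
    (h₁ : I p₁ l₁) (h₂ : I p₂ l₁) (h₃ : I p₂ l₂) (h₄ : I p₃ l₂) (h₅ : I p₃ l₃) (h₆ : I p₄ l₃)
    (h₇ : I p₄ l₄) (h₈ : I p₁ l₄)
    (hp₁₂ : p₁ ≠ p₂) (hp₂₃ : p₂ ≠ p₃) (hp₃₄ : p₃ ≠ p₄) (hp₄₁ : p₄ ≠ p₁)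
    (hl₁₂ : l₁ ≠ l₂) (hl₂₃ : l₂ ≠ l₃) (hl₃₄ : l₃ ≠ l₄) (hl₄₁ : l₄ ≠ l₁) : False := by
  have hg₄ : 4 < (incGraph I).egirth := lt_trans (by norm_num) hg
  have hp₁₃ : p₁ ≠ p₃ := by
    rintro rfl
    exact (eq_or_eq_of_four_lt_egirth hg₄ h₁ h₂ h₃ h₄).elim hp₁₂ hl₁₂
  have hp₂₄ : p₂ ≠ p₄ := by
    rintro rfl
    exact (eq_or_eq_of_four_lt_egirth hg₄ h₃ h₄ h₅ h₆).elim hp₂₃ hl₂₃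
  let w : (incGraph I).Walk (.inl p₁) (.inl p₁) :=
    .cons (incGraph_adj_inl_inr.2 h₁) <| .cons (incGraph_adj_inr_inl.2 h₂) <|
    .cons (incGraph_adj_inl_inr.2 h₃) <| .cons (incGraph_adj_inr_inl.2 h₄) <|
    .cons (incGraph_adj_inl_inr.2 h₅) <| .cons (incGraph_adj_inr_inl.2 h₆) <|
    .cons (incGraph_adj_inl_inr.2 h₇) <| .cons (incGraph_adj_inr_inl.2 h₈) .nil
  have hw : w.IsCircuit := ⟨⟨by
    simp [w, hp₁₂, hp₂₃, hp₃₄, hp₄₁, hp₁₃, hp₂₄, hl₁₂, hl₂₃, hl₃₄, hp₁₂.symm, hp₄₁.symm, hp₁₃.symm,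
      hl₄₁.symm]⟩, by simp [w]⟩
  exact hg.not_ge (by simpa [w] using hw.egirth_le_length)

lemma autGroup.incident_apply {g : Perm P × Perm L} (hg : g ∈ autGroup I) {p : P} {l : L}
    (h : I p l) : I (g.1 p) (g.2 l) :=
  (hg p l).1 h

lemma Commute.fst_apply_comm {m c : Perm P × Perm L} (h : Commute m c) (p : P) :
    m.1 (c.1 p) = c.1 (m.1 p) :=
  congrArg (fun g : Perm P × Perm L ↦ g.1 p) h.eq

theorem PrimitiveOnPoints.exists_apply_eq_of_normal {G : Subgroup (Perm P × Perm L)}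
    (hP : PrimitiveOnPoints G)
    (hfaith : ∀ g : G, (∀ p : P, (g : Perm P × Perm L).1 p = p) → g = 1)
    {N : Subgroup G} (hN : N.Normal) (hNbot : N ≠ ⊥) (x y : P) :
    ∃ n ∈ N, (n : Perm P × Perm L).1 x = y := by
  let : MulAction G P := MulAction.compHom P ((MonoidHom.fst _ _).comp G.subtype)
  have : MulAction.IsPreprimitive G P :=
    { exists_smul_eq := fun x y ↦ by
        obtain ⟨g, hg, h⟩ := hP.1 x y
        exact ⟨⟨g, hg⟩, h⟩
      isTrivialBlock_of_isBlock := fun hB ↦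
        hP.2 _ fun g hg ↦ MulAction.isBlock_iff_smul_eq_or_disjoint.1 hB ⟨g, hg⟩ }
  have hNfix : MulAction.fixedPoints N P ≠ Set.univ := fun h ↦ hNbot <|
    (Subgroup.eq_bot_iff_forall N).2 fun n hn ↦ hfaith n fun p ↦
      (h ▸ Set.mem_univ p : p ∈ MulAction.fixedPoints N P) ⟨n, hn⟩
  have hNtrans := MulAction.IsQuasiPreprimitive.isPretransitive_of_normal (N := N) hNfix
  obtain ⟨n, hn⟩ := hNtrans.exists_smul_eq x y
  exact ⟨n, n.2, hn⟩

lemma snd_apply_eq_of_transitive_centralizer (hg : 6 < (incGraph I).egirth)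
    (hln : ∀ l, 3 ≤ Nat.card {p : P // I p l}) {m : Perm P × Perm L} (hm : m ∈ autGroup I)
    {x : P} (hC : ∀ y, ∃ c ∈ autGroup I, Commute m c ∧ c.1 x = y)
    {l : L} (hxl : I x l) (hmxl : I (m.1 x) l) (hmx : m.1 x ≠ x) : m.2 l = l := by
  by_contra hml
  have hg₄ : 4 < (incGraph I).egirth := lt_trans (by norm_num) hg
  obtain ⟨b, hbl, hbx, hbmx⟩ := Set.exists_mem_ne_ne_of_two_lt_ncard (hln l) x (m.1 x)
  obtain ⟨c, hc, hmc, rfl⟩ := hC b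
  have hmxml := autGroup.incident_apply hm hxl
  have hmcxml := autGroup.incident_apply hm hbl
  have hcxcl := autGroup.incident_apply hc hxl
  have hmcxcl := autGroup.incident_apply hc hmxl
  rw [← hmc.fst_apply_comm] at hmcxcl
  have hmcx_mx : m.1 (c.1 x) ≠ m.1 x := m.1.injective.ne hbx
  have hmcx_cx : m.1 (c.1 x) ≠ c.1 x := by
    rw [hmc.fst_apply_comm]
    exact c.1.injective.ne hmx
  have hcl : c.2 l ≠ l := fun h ↦
    (eq_or_eq_of_four_lt_egirth hg₄ hmcxml hmxml hmxl (h ▸ hmcxcl)).elim hmcx_mx hml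
  have hmcl : m.2 l ≠ c.2 l := fun h ↦
    (eq_or_eq_of_four_lt_egirth hg₄ hmxml (h ▸ hcxcl) hbl hmxl).elim hbmx.symm hml
  exact false_of_triangle hg hmxl hbl hcxcl hmcxcl hmcxml hmxml hbmx.symm hmcx_cx.symm hmcx_mx
    hcl.symm hmcl.symm hml

lemma false_of_commute_of_fixed_lines (hg : 8 < (incGraph I).egirth) {m c : Perm P × Perm L}
    (hm : m ∈ autGroup I) (hc : c ∈ autGroup I) (hmc : Commute m c) {x : P} {l₁ l₂ : L}
    (hl₁ : I x l₁) (hl₂ : I x l₂) (hl₁₂ : l₂ ≠ l₁)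
    (hmxl : I (m.1 x) l₁) (hmx : m.1 x ≠ x) (hml : m.2 l₁ = l₁)
    (hcxl : I (c.1 x) l₂) (hcx : c.1 x ≠ x) (hcl : c.2 l₂ = l₂) : False := by
  have hg₄ : 4 < (incGraph I).egirth := lt_trans (by norm_num) hg
  have hmx_ml := autGroup.incident_apply hm hl₂
  have hmcx_ml := autGroup.incident_apply hm hcxl
  have hcx_cl := autGroup.incident_apply hc hl₁
  have hmcx_cl := autGroup.incident_apply hc hmxl
  rw [← hmc.fst_apply_comm] at hmcx_cl
  have hl₁_ml₂ : l₁ ≠ m.2 l₂ := fun h ↦ hl₁₂ (m.2.injective (h.symm.trans hml.symm))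
  have hcl₁_l₂ : c.2 l₁ ≠ l₂ := fun h ↦ hl₁₂.symm (c.2.injective (h.trans hcl.symm))
  have hmx_cx : m.1 x ≠ c.1 x := fun h ↦
    (eq_or_eq_of_four_lt_egirth hg₄ hmxl hl₁ hl₂ (h ▸ hcxl)).elim hmx hl₁₂.symm
  have hml₂_cl₁ : m.2 l₂ ≠ c.2 l₁ := fun h ↦
    false_of_triangle (lt_trans (by norm_num) hg) hl₁ hmxl hmx_ml (h ▸ hcx_cl) hcxl hl₂
      hmx.symm hmx_cx hcx hl₁_ml₂ (h ▸ hcl₁_l₂) hl₁₂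
  exact false_of_quadrangle hg hl₁ hmxl hmx_ml hmcx_ml hmcx_cl hcx_cl hcxl hl₂ hmx.symm
    (m.1.injective.ne hcx.symm) (by rw [hmc.fst_apply_comm]; exact c.1.injective.ne hmx) hcx
    hl₁_ml₂ hml₂_cl₁ hcl₁_l₂ hl₁₂

theorem false_of_commute_of_transitive (hg : 8 < (incGraph I).egirth) {x : P}
    (hx : 2 ≤ Nat.card {l : L // I x l}) (hln : ∀ l, 3 ≤ Nat.card {p : P // I p l})
    {G : Subgroup (Perm P × Perm L)} (hG : G ≤ autGroup I) {M C : Set G}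
    (hMC : ∀ m ∈ M, ∀ c ∈ C, Commute m c)
    (hMx : ∀ y, ∃ m ∈ M, (m : Perm P × Perm L).1 x = y)
    (hCx : ∀ y, ∃ c ∈ C, (c : Perm P × Perm L).1 x = y) : False := by
  have hg₆ : 6 < (incGraph I).egirth := lt_trans (by norm_num) hg
  have hln' (l : L) : 1 < {p | I p l}.ncard := (hln l).trans_lt' (by norm_num)
  obtain ⟨l₁, hl₁⟩ := Set.nonempty_of_ncard_ne_zero (s := {l | I x l})
    (zero_lt_two.trans_le hx).ne'
  obtain ⟨l₂, hl₂, hl₁₂⟩ := Set.exists_ne_of_one_lt_ncard hx l₁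
  obtain ⟨a, ha, hax⟩ := Set.exists_ne_of_one_lt_ncard (hln' l₁) x
  obtain ⟨b, hb, hbx⟩ := Set.exists_ne_of_one_lt_ncard (hln' l₂) x
  obtain ⟨⟨m, hmG⟩, hmM, rfl⟩ := hMx a
  obtain ⟨⟨c, hcG⟩, hcC, rfl⟩ := hCx b
  have hml := snd_apply_eq_of_transitive_centralizer hg₆ hln (hG hmG) (fun y ↦ by
    obtain ⟨c', hc'C, rfl⟩ := hCx y
    exact ⟨c', hG c'.2, (hMC _ hmM _ hc'C).map G.subtype, rfl⟩) hl₁ ha hax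
  have hcl := snd_apply_eq_of_transitive_centralizer hg₆ hln (hG hcG) (fun y ↦ by
    obtain ⟨m', hm'M, rfl⟩ := hMx y
    exact ⟨m', hG m'.2, ((hMC _ hm'M _ hcC).map G.subtype).symm, rfl⟩) hl₂ hb hbx
  exact false_of_commute_of_fixed_lines hg (hG hmG) (hG hcG) ((hMC _ hmM _ hcC).map G.subtype)
    hl₁ hl₂ hl₁₂ ha hax hml hb hbx hcl

end

theorem centralizer_of_normal_subgroup_trivial_general
    {P L : Type*} (I : P → L → Prop)
    (hS : IsGenPolygon 6 I ∨ IsGenPolygon 8 I)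
    (G : Subgroup (Equiv.Perm P × Equiv.Perm L)) (hG : G ≤ autGroup I)
    (hfaith : ∀ g : G, (∀ p : P, ((g : Equiv.Perm P × Equiv.Perm L)).1 p = p) → g = 1)
    (hP : PrimitiveOnPoints G)
    (M : Subgroup G) (hM : M.Normal) (hMbot : M ≠ ⊥) :
    Subgroup.centralizer (M : Set G) = ⊥ := by
  obtain ⟨hpt, hln, hg⟩ : (∀ p, 3 ≤ Nat.card {l : L // I p l}) ∧
      (∀ l, 3 ≤ Nat.card {p : P // I p l}) ∧ 8 < (incGraph I).egirth := by
    rcases hS with ⟨hpt, hln, -, hg⟩ | ⟨hpt, hln, -, hg⟩ <;>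
      exact ⟨hpt, hln, by rw [hg]; norm_num⟩
  obtain ⟨x⟩ : Nonempty P := by
    by_contra hempty
    exact hMbot <| (Subgroup.eq_bot_iff_forall M).2 fun g _ ↦
      hfaith g fun p ↦ (hempty ⟨p⟩).elim
  by_contra hC
  have hMx := hP.exists_apply_eq_of_normal hfaith hM hMbot x
  have hCx := hP.exists_apply_eq_of_normal hfaith (Subgroup.normal_centralizer (H := M)) hC x
  exact false_of_commute_of_transitive hg ((hpt x).trans' (by norm_num)) hln hG
    (fun m hm c hc ↦ Subgroup.mem_centralizer_iff.1 hc m hm) hMx hCx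

/-- If a group `G` of automorphisms of a finite generalized hexagon or
octagon acts faithfully and primitively on the points, then every nontrivial normal
subgroup `M` of `G` has trivial centralizer in `G`. (In particular the O'Nan–Scott type
of `G` on the points is not HA, HS or HC.) -/
theorem centralizer_of_normal_subgroup_trivial
    {P L : Type*} [Fintype P] [Fintype L] (I : P → L → Prop)
    (hS : IsGenPolygon 6 I ∨ IsGenPolygon 8 I)
    (G : Subgroup (Equiv.Perm P × Equiv.Perm L)) (hG : G ≤ autGroup I)
    (hfaith : ∀ g : G, (∀ p : P, ((g : Equiv.Perm P × Equiv.Perm L)).1 p = p) → g = 1)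
    (hP : PrimitiveOnPoints G)
    (M : Subgroup G) (hM : M.Normal) (hMbot : M ≠ ⊥) :
    Subgroup.centralizer (M : Set G) = ⊥ :=
  centralizer_of_normal_subgroup_trivial_general I hS G hG hfaith hP M hM hMbot
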